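/- arXiv:1502.03068 — 3 statements merged into one kernel-verified Lean document; each statement's English description precedes it below -/
import Mathlib

section
/- With Z symmetric positive definite, Γ and Λ complementary selection matrices as above, and W = Γᵀ(ΓZΓᵀ)⁻¹Γ, the identity (Λᵀ − WZΛᵀ)(Λ(Z − ZWZ)Λᵀ)⁻¹ = Z⁻¹Λᵀ holds. -/
open Matrix

/-!
Put `S := Z - Z W Z`. Since `W Z Γᵀ = Γᵀ` and `Γ Z W = Γ`, the matrix `S` is annihilated by `Γ`
on both sides, so by complementarity `S = Λᵀ M Λ` with `M := Λ S Λᵀ`. Hence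
`Λᵀ - W Z Λᵀ = Z⁻¹ S Λᵀ = Z⁻¹ Λᵀ M`, and it remains to invert `M`: its inverse is `Λ Z⁻¹ Λᵀ`,
because `S Z⁻¹ Λᵀ = Λᵀ - Z W Λᵀ = Λᵀ`.
-/

section Selection

variable {R : Type*} [CommRing R] {m p q : Type*} [Fintype m] [Fintype p]
  {Γ : Matrix p m R} {Λ : Matrix q m R}

theorem mul_transpose_mul_eq_self_of_mul_transpose_eq_zero [Fintype q] [DecidableEq m]
    (hcompl : Γᵀ * Γ + Λᵀ * Λ = 1)
    {S : Matrix m m R} (hS : S * Γᵀ = 0) : S * Λᵀ * Λ = S := by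
  calc S * Λᵀ * Λ = S * (Γᵀ * Γ + Λᵀ * Λ) := by
        rw [Matrix.mul_add, ← Matrix.mul_assoc, hS, Matrix.zero_mul, zero_add, Matrix.mul_assoc]
    _ = S := by rw [hcompl, Matrix.mul_one]

theorem transpose_mul_mul_eq_self_of_mul_eq_zero [Fintype q] [DecidableEq m]
    (hcompl : Γᵀ * Γ + Λᵀ * Λ = 1)
    {S : Matrix m m R} (hS : Γ * S = 0) : Λᵀ * Λ * S = S := by
  calc Λᵀ * Λ * S = (Γᵀ * Γ + Λᵀ * Λ) * S := by
        rw [Matrix.add_mul, Matrix.mul_assoc Γᵀ, hS, Matrix.mul_zero, zero_add]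
    _ = S := by rw [hcompl, Matrix.one_mul]

theorem compress_mul_compress_eq_one [Fintype q] [DecidableEq m] [DecidableEq q]
    (hcompl : Γᵀ * Γ + Λᵀ * Λ = 1) (hΛΛ : Λ * Λᵀ = 1)
    {S X : Matrix m m R} (hSΓ : S * Γᵀ = 0) (hSXΛ : S * X * Λᵀ = Λᵀ) :
    Λ * S * Λᵀ * (Λ * X * Λᵀ) = 1 := by
  calc Λ * S * Λᵀ * (Λ * X * Λᵀ) = Λ * ((S * Λᵀ * Λ) * X * Λᵀ) := by
        simp only [Matrix.mul_assoc]
    _ = 1 := by rw [mul_transpose_mul_eq_self_of_mul_transpose_eq_zero hcompl hSΓ, hSXΛ, hΛΛ]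

variable [DecidableEq p] {Z W : Matrix m m R}

theorem weight_mul_mul_transpose (hA : IsUnit (Γ * Z * Γᵀ).det)
    (hW : W = Γᵀ * (Γ * Z * Γᵀ)⁻¹ * Γ) : W * Z * Γᵀ = Γᵀ := by
  rw [hW, Matrix.mul_assoc, Matrix.mul_assoc, Matrix.mul_assoc, ← Matrix.mul_assoc Γ,
    nonsing_inv_mul _ hA, Matrix.mul_one]

theorem mul_mul_weight (hA : IsUnit (Γ * Z * Γᵀ).det)
    (hW : W = Γᵀ * (Γ * Z * Γᵀ)⁻¹ * Γ) : Γ * Z * W = Γ := by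
  rw [hW, ← Matrix.mul_assoc, ← Matrix.mul_assoc, mul_nonsing_inv _ hA, Matrix.one_mul]

theorem schur_mul_transpose_eq_zero (hA : IsUnit (Γ * Z * Γᵀ).det)
    (hW : W = Γᵀ * (Γ * Z * Γᵀ)⁻¹ * Γ) : (Z - Z * W * Z) * Γᵀ = 0 := by
  rw [Matrix.sub_mul, Matrix.mul_assoc Z W, Matrix.mul_assoc Z, weight_mul_mul_transpose hA hW,
    sub_self]

theorem mul_schur_eq_zero (hA : IsUnit (Γ * Z * Γᵀ).det)
    (hW : W = Γᵀ * (Γ * Z * Γᵀ)⁻¹ * Γ) : Γ * (Z - Z * W * Z) = 0 := by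
  rw [Matrix.mul_sub, ← Matrix.mul_assoc, ← Matrix.mul_assoc, mul_mul_weight hA hW, sub_self]

theorem weight_mul_transpose_eq_zero (hΛΓ : Λ * Γᵀ = 0) (hW : W = Γᵀ * (Γ * Z * Γᵀ)⁻¹ * Γ) :
    W * Λᵀ = 0 := by
  rw [hW, Matrix.mul_assoc, ← transpose_transpose Γ, ← transpose_mul, hΛΓ, transpose_zero,
    Matrix.mul_zero]

end Selection

theorem posDef_mul_mul_transpose_of_mul_transpose_eq_one {m p : Type*} [Fintype m] [Fintype p]
    [DecidableEq p]
    {Γ : Matrix p m ℝ} (hΓΓ : Γ * Γᵀ = 1) {Z : Matrix m m ℝ} (hZ : Z.PosDef) :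
    (Γ * Z * Γᵀ).PosDef := by
  have hinj : Function.Injective Γ.vecMul := fun x y h => by
    simpa [vecMul_vecMul, hΓΓ] using congrArg (· ᵥ* Γᵀ) h
  simpa using hZ.mul_mul_conjTranspose_same hinj

theorem selection_inverse_identity_general
    (m p q : ℕ)
    (Γ : Matrix (Fin p) (Fin m) ℝ) (Λ : Matrix (Fin q) (Fin m) ℝ)
    (hΓΓ : Γ * Γᵀ = 1) (hΛΛ : Λ * Λᵀ = 1)
    (hcompl : Γᵀ * Γ + Λᵀ * Λ = 1) (hΛΓ : Λ * Γᵀ = 0)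
    (Z : Matrix (Fin m) (Fin m) ℝ) (hZ : Z.PosDef)
    (W : Matrix (Fin m) (Fin m) ℝ) (hW : W = Γᵀ * (Γ * Z * Γᵀ)⁻¹ * Γ) :
    (Λᵀ - W * Z * Λᵀ) * (Λ * (Z - Z * W * Z) * Λᵀ)⁻¹ = Z⁻¹ * Λᵀ := by
  have hA : IsUnit (Γ * Z * Γᵀ).det :=
    (posDef_mul_mul_transpose_of_mul_transpose_eq_one hΓΓ hZ).det_pos.ne'.isUnit
  have hZdet : IsUnit Z.det := hZ.det_pos.ne'.isUnit
  set S := Z - Z * W * Z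
  have hSΓ : S * Γᵀ = 0 := schur_mul_transpose_eq_zero hA hW
  have hΓS : Γ * S = 0 := mul_schur_eq_zero hA hW
  have hM : Λ * S * Λᵀ * (Λ * Z⁻¹ * Λᵀ) = 1 := by
    refine compress_mul_compress_eq_one hcompl hΛΛ hSΓ ?_
    rw [Matrix.sub_mul, mul_nonsing_inv _ hZdet, Matrix.mul_assoc _ Z, mul_nonsing_inv _ hZdet,
      Matrix.mul_one, Matrix.sub_mul, Matrix.one_mul, Matrix.mul_assoc,
      weight_mul_transpose_eq_zero hΛΓ hW, Matrix.mul_zero, sub_zero]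
  have hlhs : Λᵀ - W * Z * Λᵀ = Z⁻¹ * Λᵀ * (Λ * S * Λᵀ) :=
    calc Λᵀ - W * Z * Λᵀ = Z⁻¹ * S * Λᵀ := by
          rw [Matrix.mul_sub, ← Matrix.mul_assoc, ← Matrix.mul_assoc, nonsing_inv_mul _ hZdet,
            Matrix.one_mul, Matrix.sub_mul, Matrix.one_mul]
      _ = Z⁻¹ * Λᵀ * (Λ * S * Λᵀ) := by
          conv_lhs => rw [← transpose_mul_mul_eq_self_of_mul_eq_zero hcompl hΓS]
          simp only [Matrix.mul_assoc]
  rw [hlhs, Matrix.mul_assoc, inv_eq_right_inv hM, hM, Matrix.mul_one]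

theorem selection_inverse_identity
    (m p q : ℕ) (hm : 0 < m)
    (Γ : Matrix (Fin p) (Fin m) ℝ) (Λ : Matrix (Fin q) (Fin m) ℝ)
    (hΓΓ : Γ * Γᵀ = 1) (hΛΛ : Λ * Λᵀ = 1)
    (hcompl : Γᵀ * Γ + Λᵀ * Λ = 1) (hΛΓ : Λ * Γᵀ = 0)
    (Z : Matrix (Fin m) (Fin m) ℝ) (hZ : Z.PosDef)
    (W : Matrix (Fin m) (Fin m) ℝ) (hW : W = Γᵀ * (Γ * Z * Γᵀ)⁻¹ * Γ) :
    (Λᵀ - W * Z * Λᵀ) * (Λ * (Z - Z * W * Z) * Λᵀ)⁻¹ = Z⁻¹ * Λᵀ :=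
  selection_inverse_identity_general m p q Γ Λ hΓΓ hΛΛ hcompl hΛΓ Z hZ W hW
end

section
/- Let Q, R, Y be symmetric positive definite and suppose S is symmetric positive definite. Then the condition S ≤ (A S⁻¹ Aᵀ + Q)⁻¹ + Cᵀ(R + Y⁻¹)⁻¹C holds if and only if the 2×2 block matrix [[Q⁻¹ + Cᵀ(R+Y⁻¹)⁻¹C − S, Q⁻¹A],[AᵀQ⁻¹, AᵀQ⁻¹A + S]] is positive semidefinite. -/
open Matrix
open scoped ComplexOrder

/-! By the matrix inversion lemma, `(A S⁻¹ Aᵀ + Q)⁻¹ + M` equals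
`Q⁻¹ + M - Q⁻¹ A (Aᵀ Q⁻¹ A + S)⁻¹ Aᵀ Q⁻¹`, which is the Schur complement of the positive definite
block `Aᵀ Q⁻¹ A + S` in the block matrix; take `M = Cᵀ (R + Y⁻¹)⁻¹ C - S`. -/

namespace Matrix

variable {m n 𝕜 : Type*} [Fintype m] [Fintype n] [DecidableEq m] [RCLike 𝕜]
  {Q : Matrix m m 𝕜} {S : Matrix n n 𝕜}

theorem PosDef.conjTranspose_mul_inv_mul_add (hQ : Q.PosDef) (hS : S.PosDef) (A : Matrix m n 𝕜) :
    (Aᴴ * Q⁻¹ * A + S).PosDef :=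
  PosDef.posSemidef_add (hQ.inv.posSemidef.conjTranspose_mul_mul_same A) hS

theorem PosDef.mul_inv_mul_conjTranspose_add_inv_eq [DecidableEq n]
    (hQ : Q.PosDef) (hS : S.PosDef) (A : Matrix m n 𝕜) :
    (A * S⁻¹ * Aᴴ + Q)⁻¹ = Q⁻¹ - Q⁻¹ * A * (Aᴴ * Q⁻¹ * A + S)⁻¹ * Aᴴ * Q⁻¹ := by
  have hSS : S⁻¹⁻¹ = S := nonsing_inv_nonsing_inv S ((isUnit_iff_isUnit_det S).mp hS.isUnit)
  have hW := add_mul_mul_inv_eq_sub Q A S⁻¹ Aᴴ hQ.isUnit hS.inv.isUnit <| by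
    rw [hSS, add_comm]
    exact (hQ.conjTranspose_mul_inv_mul_add hS A).isUnit
  rw [add_comm, hW, hSS, add_comm S]

theorem PosDef.posSemidef_mul_inv_mul_conjTranspose_add_inv_add_iff [DecidableEq n]
    (hQ : Q.PosDef) (hS : S.PosDef) (A : Matrix m n 𝕜) (M : Matrix m m 𝕜) :
    ((A * S⁻¹ * Aᴴ + Q)⁻¹ + M).PosSemidef ↔
      (fromBlocks (Q⁻¹ + M) (Q⁻¹ * A) (Aᴴ * Q⁻¹) (Aᴴ * Q⁻¹ * A + S)).PosSemidef := by
  have hD := hQ.conjTranspose_mul_inv_mul_add hS A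
  have := hD.isUnit.invertible
  have hB : (Q⁻¹ * A)ᴴ = Aᴴ * Q⁻¹ := by rw [conjTranspose_mul, hQ.inv.isHermitian.eq]
  have hSchur := PosDef.fromBlocks₂₂ (Q⁻¹ + M) (Q⁻¹ * A) hD
  rw [hB] at hSchur
  rw [hSchur, hQ.mul_inv_mul_conjTranspose_add_inv_eq hS A]
  congr! 1
  simp only [Matrix.mul_assoc]
  abel

end Matrix

theorem lmi_equivalence_general
    (n s : ℕ)
    (A : Matrix (Fin n) (Fin n) ℝ) (C : Matrix (Fin s) (Fin n) ℝ)
    (Q : Matrix (Fin n) (Fin n) ℝ) (R Y : Matrix (Fin s) (Fin s) ℝ)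
    (hQ : Q.PosDef)
    (S : Matrix (Fin n) (Fin n) ℝ) (hS : S.PosDef) :
    ((A * S⁻¹ * Aᵀ + Q)⁻¹ + Cᵀ * (R + Y⁻¹)⁻¹ * C - S).PosSemidef ↔
      (fromBlocks (Q⁻¹ + Cᵀ * (R + Y⁻¹)⁻¹ * C - S) (Q⁻¹ * A)
        (Aᵀ * Q⁻¹) (Aᵀ * Q⁻¹ * A + S)).PosSemidef := by
  simp only [add_sub_assoc, ← conjTranspose_eq_transpose_of_trivial]
  exact hQ.posSemidef_mul_inv_mul_conjTranspose_add_inv_add_iff hS A _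

theorem lmi_equivalence
    (n s : ℕ) (hn : 0 < n) (hs : 0 < s)
    (A : Matrix (Fin n) (Fin n) ℝ) (C : Matrix (Fin s) (Fin n) ℝ)
    (Q : Matrix (Fin n) (Fin n) ℝ) (R Y : Matrix (Fin s) (Fin s) ℝ)
    (hQ : Q.PosDef) (hR : R.PosDef) (hY : Y.PosDef)
    (S : Matrix (Fin n) (Fin n) ℝ) (hS : S.PosDef) :
    ((A * S⁻¹ * Aᵀ + Q)⁻¹ + Cᵀ * (R + Y⁻¹)⁻¹ * C - S).PosSemidef ↔
      (fromBlocks (Q⁻¹ + Cᵀ * (R + Y⁻¹)⁻¹ * C - S) (Q⁻¹ * A)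
        (Aᵀ * Q⁻¹) (Aᵀ * Q⁻¹ * A + S)).PosSemidef :=
  lmi_equivalence_general n s A C Q R Y hQ S hS
end

section
/- Let ḣ(X) = h(AXAᵀ + Q) where h(X) = X − XCᵀ(CXCᵀ + R + Y⁻¹)⁻¹CX. Then ḣ is monotone on positive semidefinite matrices: if 0 ≤ X₁ ≤ X₂ then ḣ(X₁) ≤ ḣ(X₂). -/
/-!
By the Woodbury identity, `P - P Cᴴ (C P Cᴴ + S)⁻¹ C P = (P⁻¹ + Cᴴ S⁻¹ C)⁻¹` for positive definite
`P` and `S`, so the update is matrix inversion, then translation by the positive semidefinite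
`Cᴴ S⁻¹ C`, then inversion again. Inversion reverses the Loewner order: writing `B = A + L L` with
`L = √(B - A)`, Woodbury once more gives `A⁻¹ - B⁻¹ = (L A⁻¹)ᴴ (L A⁻¹ L + 1)⁻¹ (L A⁻¹) ≥ 0`.
Precomposing with the monotone map `X ↦ A X Aᵀ + Q` gives the theorem.
-/

open Matrix
open scoped ComplexOrder MatrixOrder

section

variable {𝕜 m n : Type*} [RCLike 𝕜] [Fintype m] [Fintype n] [DecidableEq m] [DecidableEq n]

namespace Matrix

theorem PosDef.inv_inv {P : Matrix n n 𝕜} (hP : P.PosDef) : P⁻¹⁻¹ = P :=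
  nonsing_inv_nonsing_inv P ((isUnit_iff_isUnit_det P).mp hP.isUnit)

theorem PosDef.inv_add_conjTranspose_mul_inv_mul_inv_eq_sub {P : Matrix n n 𝕜}
    {S : Matrix m m 𝕜} (hP : P.PosDef) (hS : S.PosDef) (C : Matrix m n 𝕜) :
    (P⁻¹ + Cᴴ * S⁻¹ * C)⁻¹ = P - P * Cᴴ * (C * P * Cᴴ + S)⁻¹ * C * P := by
  have hU : IsUnit (S⁻¹⁻¹ + C * P⁻¹⁻¹ * Cᴴ) := by
    rw [hP.inv_inv, hS.inv_inv, add_comm]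
    exact (PosDef.posSemidef_add (hP.posSemidef.mul_mul_conjTranspose_same C) hS).isUnit
  rw [add_mul_mul_inv_eq_sub _ _ _ _ hP.inv.isUnit hS.inv.isUnit hU, hP.inv_inv, hS.inv_inv,
    add_comm S]

theorem PosDef.inv_antitone {A B : Matrix n n 𝕜} (hA : A.PosDef) (hAB : A ≤ B) :
    B⁻¹ ≤ A⁻¹ := by
  set L := CFC.sqrt (B - A)
  have hL : Lᴴ = L := (CFC.sqrt_nonneg (B - A)).star_eq
  have hB : B = A⁻¹⁻¹ + Lᴴ * 1⁻¹ * L := by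
    rw [hA.inv_inv, inv_one, mul_one, hL, CFC.sqrt_mul_sqrt_self _ (sub_nonneg.mpr hAB),
      add_sub_cancel]
  have hM : (L * A⁻¹ * Lᴴ + 1).PosDef :=
    PosDef.posSemidef_add (hA.inv.posSemidef.mul_mul_conjTranspose_same L) PosDef.one
  have hdiff : A⁻¹ - B⁻¹ = star (L * A⁻¹) * (L * A⁻¹ * Lᴴ + 1)⁻¹ * (L * A⁻¹) := by
    rw [hB, hA.inv.inv_add_conjTranspose_mul_inv_mul_inv_eq_sub PosDef.one, star_eq_conjTranspose,
      conjTranspose_mul, hA.inv.isHermitian.eq]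
    noncomm_ring
  rw [← sub_nonneg, hdiff]
  exact star_left_conjugate_nonneg hM.inv.posSemidef.nonneg _

end Matrix

/-- The paper's `h`, with measurement noise covariance `S = R + Y⁻¹`. -/
noncomputable def kalmanUpdate (C : Matrix m n 𝕜) (S : Matrix m m 𝕜) (P : Matrix n n 𝕜) :
    Matrix n n 𝕜 :=
  P - P * Cᴴ * (C * P * Cᴴ + S)⁻¹ * C * P

theorem kalmanUpdate_mono (C : Matrix m n 𝕜) {S : Matrix m m 𝕜} (hS : S.PosDef)
    {P₁ P₂ : Matrix n n 𝕜} (hP₁ : P₁.PosDef) (hP : P₁ ≤ P₂) :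
    kalmanUpdate C S P₁ ≤ kalmanUpdate C S P₂ := by
  have hP₂ : P₂.PosDef := by simpa using hP₁.add_posSemidef hP
  have hK : (Cᴴ * S⁻¹ * C).PosSemidef := hS.inv.posSemidef.conjTranspose_mul_mul_same C
  have hinv : P₂⁻¹ + Cᴴ * S⁻¹ * C ≤ P₁⁻¹ + Cᴴ * S⁻¹ * C :=
    add_le_add_left (hP₁.inv_antitone hP) _
  rw [kalmanUpdate, kalmanUpdate, ← hP₁.inv_add_conjTranspose_mul_inv_mul_inv_eq_sub hS,
    ← hP₂.inv_add_conjTranspose_mul_inv_mul_inv_eq_sub hS]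
  exact (hP₂.inv.add_posSemidef hK).inv_antitone hinv

end

theorem hbar_monotone_general
    (n s : ℕ)
    (A : Matrix (Fin n) (Fin n) ℝ) (C : Matrix (Fin s) (Fin n) ℝ)
    (Q : Matrix (Fin n) (Fin n) ℝ) (R Y : Matrix (Fin s) (Fin s) ℝ)
    (hQ : Q.PosDef) (hR : R.PosDef) (hY : Y.PosDef)
    (X₁ X₂ : Matrix (Fin n) (Fin n) ℝ)
    (hX₁ : X₁.PosSemidef)
    (hle : (X₂ - X₁).PosSemidef) :
    (((A * X₂ * Aᵀ + Q) - (A * X₂ * Aᵀ + Q) * Cᵀ *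
        (C * (A * X₂ * Aᵀ + Q) * Cᵀ + R + Y⁻¹)⁻¹ * C * (A * X₂ * Aᵀ + Q)) -
     ((A * X₁ * Aᵀ + Q) - (A * X₁ * Aᵀ + Q) * Cᵀ *
        (C * (A * X₁ * Aᵀ + Q) * Cᵀ + R + Y⁻¹)⁻¹ * C * (A * X₁ * Aᵀ + Q))).PosSemidef := by
  have hS : (R + Y⁻¹).PosDef := hR.add hY.inv
  have hP₁ : (A * X₁ * Aᴴ + Q).PosDef :=
    PosDef.posSemidef_add (hX₁.mul_mul_conjTranspose_same A) hQ
  have hP : A * X₁ * Aᴴ + Q ≤ A * X₂ * Aᴴ + Q :=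
    add_le_add_left (star_right_conjugate_le_conjugate hle A) Q
  rw [← le_iff]
  simpa only [kalmanUpdate, conjTranspose_eq_transpose_of_trivial, add_assoc] using
    kalmanUpdate_mono C hS hP₁ hP

theorem hbar_monotone
    (n s : ℕ) (hn : 0 < n) (hs : 0 < s)
    (A : Matrix (Fin n) (Fin n) ℝ) (C : Matrix (Fin s) (Fin n) ℝ)
    (Q : Matrix (Fin n) (Fin n) ℝ) (R Y : Matrix (Fin s) (Fin s) ℝ)
    (hQ : Q.PosDef) (hR : R.PosDef) (hY : Y.PosDef)
    (X₁ X₂ : Matrix (Fin n) (Fin n) ℝ)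
    (hX₁ : X₁.PosSemidef) (hX₂ : X₂.PosSemidef)
    (hle : (X₂ - X₁).PosSemidef) :
    (((A * X₂ * Aᵀ + Q) - (A * X₂ * Aᵀ + Q) * Cᵀ *
        (C * (A * X₂ * Aᵀ + Q) * Cᵀ + R + Y⁻¹)⁻¹ * C * (A * X₂ * Aᵀ + Q)) -
     ((A * X₁ * Aᵀ + Q) - (A * X₁ * Aᵀ + Q) * Cᵀ *
        (C * (A * X₁ * Aᵀ + Q) * Cᵀ + R + Y⁻¹)⁻¹ * C * (A * X₁ * Aᵀ + Q))).PosSemidef :=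
  hbar_monotone_general n s A C Q R Y hQ hR hY X₁ X₂ hX₁ hle
end
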